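/- If X and Y are n×n Hermitian matrices with e^{iX} = e^{iY} and the spectral (operator) norm of X is at most π, then |X| ≤ |Y| in the Löwner order, where |A| = √(A*A). -/

import Mathlib

/-!
For Hermitian `X`, `exp (i X) = cos X + i sin X` with both `cos X` and `sin X` Hermitian, so
`cos X` is the real part of `exp (i X)` and hence `cos X = cos Y`. The spectrum of `X` lies in
`[-π, π]`, where `|t| = arccos (cos t)`; therefore
`|X| = arccos (cos X) = arccos (cos Y) ≤ |Y|`, the last step because `arccos (cos t) ≤ |t|` for
every real `t` and the functional calculus is monotone.
-/

open Matrix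
open scoped ComplexOrder

noncomputable section

/-- n×n complex matrices -/
abbrev Mat (n : ℕ) := Matrix (Fin n) (Fin n) ℂ

/-- the former `Matrix.PosSemidef.sqrt` (removed from Mathlib), with its old definition -/
noncomputable def psdSqrt {n : ℕ} {A : Mat n} (hA : A.PosSemidef) : Mat n :=
  hA.1.eigenvectorUnitary.1 * diagonal ((↑) ∘ (√·) ∘ hA.1.eigenvalues) *
    (star hA.1.eigenvectorUnitary : Mat n)

theorem psdSqrt_isHermitian {n : ℕ} {A : Mat n} (hA : A.PosSemidef) :
    (psdSqrt hA).IsHermitian := by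
  unfold psdSqrt
  simp [Matrix.IsHermitian, Matrix.conjTranspose_mul, Matrix.diagonal_conjTranspose,
    Matrix.mul_assoc, Function.comp_def, Matrix.star_eq_conjTranspose, Pi.star_def,
    Complex.star_def]

/-- modulus |A| = sqrt (Aᴴ A) -/
noncomputable def matAbs {n : ℕ} (A : Mat n) : Mat n :=
  psdSqrt (Matrix.posSemidef_conjTranspose_mul_self A)

/-- spectral (operator) norm -/
noncomputable def specNorm {n : ℕ} (A : Mat n) : ℝ :=
  ‖Matrix.toEuclideanCLM (𝕜 := ℂ) (n := Fin n) A‖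

/-- Löwner order: `A ≤ B` iff `B - A` is positive semidefinite -/
def loewnerLE {n : ℕ} (A B : Mat n) : Prop := (B - A).PosSemidef

/-- singular values of `A`, arranged in non-increasing order -/
noncomputable def sval {n : ℕ} (A : Mat n) : Fin n → ℝ :=
  fun i =>
    let e := (psdSqrt_isHermitian (Matrix.posSemidef_conjTranspose_mul_self A)).eigenvalues
    (e ∘ Tuple.sort e) i.rev

/-- singular values indexed by naturals (0 beyond the size) -/
noncomputable def svalNat {n : ℕ} (A : Mat n) (k : ℕ) : ℝ :=
  if h : k < n then sval A ⟨k, h⟩ else 0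

/-- eigenvalues of a Hermitian matrix, arranged in non-increasing order -/
noncomputable def eigsDesc {n : ℕ} {A : Mat n} (hA : A.IsHermitian) : Fin n → ℝ :=
  fun i => (hA.eigenvalues ∘ Tuple.sort hA.eigenvalues) i.rev

open scoped MatrixOrder ComplexStarModule

lemma Real.arccos_cos_abs {x : ℝ} (hx : |x| ≤ Real.pi) : Real.arccos (Real.cos x) = |x| := by
  rw [← Real.cos_abs, Real.arccos_cos (abs_nonneg x) hx]

lemma Real.arccos_cos_le_abs (x : ℝ) : Real.arccos (Real.cos x) ≤ |x| := by
  rcases le_or_gt |x| Real.pi with hx | hx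
  · exact (Real.arccos_cos_abs hx).le
  · exact (Real.arccos_le_pi _).trans hx.le

section

variable {ι : Type*} [Fintype ι] [DecidableEq ι]

lemma Matrix.IsHermitian.abs_le_norm_toEuclideanCLM_of_mem_spectrum {𝕜 : Type*} [RCLike 𝕜]
    {A : Matrix ι ι 𝕜} (hA : A.IsHermitian) {x : ℝ} (hx : x ∈ spectrum ℝ A) :
    |x| ≤ ‖Matrix.toEuclideanCLM (𝕜 := 𝕜) A‖ := by
  obtain ⟨i, rfl⟩ := hA.spectrum_real_eq_range_eigenvalues ▸ hx
  set v := hA.eigenvectorBasis i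
  have hv : Matrix.toEuclideanCLM (𝕜 := 𝕜) A v = hA.eigenvalues i • v :=
    WithLp.ofLp_injective 2 (hA.mulVec_eigenvectorBasis i)
  have hv1 : ‖v‖ = 1 := hA.eigenvectorBasis.orthonormal.1 i
  simpa [hv, norm_smul, hv1] using (Matrix.toEuclideanCLM (𝕜 := 𝕜) A).le_opNorm v

lemma Matrix.IsHermitian.exp_I_smul_eq_cos_add_I_smul_sin {A : Matrix ι ι ℂ}
    (hA : A.IsHermitian) :
    NormedSpace.exp (Complex.I • A) = cfc Real.cos A + Complex.I • cfc Real.sin A := by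
  have hU :
      star (hA.eigenvectorUnitary : Matrix ι ι ℂ) = (hA.eigenvectorUnitary : Matrix ι ι ℂ)⁻¹ :=
    (inv_eq_left_inv (Unitary.coe_star_mul_self _)).symm
  rw [hA.cfc_eq, hA.cfc_eq, IsHermitian.cfc, IsHermitian.cfc]
  conv_lhs => rw [hA.spectral_theorem]
  rw [← map_smul, ← map_smul, ← map_add, Unitary.conjStarAlgAut_apply,
    Unitary.conjStarAlgAut_apply, hU, exp_conj _ _ Unitary.isUnit_coe, ← diagonal_smul,
    exp_diagonal, ← diagonal_smul, diagonal_add]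
  congr 3
  funext i
  simp [← Complex.exp_eq_exp_ℂ, mul_comm Complex.I, Complex.exp_mul_I]

lemma Matrix.IsHermitian.realPart_exp_I_smul {A : Matrix ι ι ℂ} (hA : A.IsHermitian) :
    (ℜ (NormedSpace.exp (Complex.I • A)) : Matrix ι ι ℂ) = cfc Real.cos A := by
  have hcos : IsSelfAdjoint (cfc Real.cos A) := cfc_predicate _ _
  have hsin : IsSelfAdjoint (cfc Real.sin A) := cfc_predicate _ _
  rw [hA.exp_I_smul_eq_cos_add_I_smul_sin, map_add, realPart_I_smul, hsin.imaginaryPart,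
    neg_zero, add_zero, hcos.coe_realPart]

end

lemma psdSqrt_eq_cfc {n : ℕ} {A : Mat n} (hA : A.PosSemidef) : psdSqrt hA = cfc Real.sqrt A := by
  rw [hA.1.cfc_eq]
  rfl

lemma matAbs_eq_cfc_abs {n : ℕ} {A : Mat n} (hA : A.IsHermitian) :
    matAbs A = cfc (fun x : ℝ ↦ |x|) A := by
  have hsq : Aᴴ * A = A ^ 2 := by rw [hA.eq, sq]
  rw [matAbs, psdSqrt_eq_cfc, hsq,
    ← cfc_comp_pow _ _ _ Real.continuous_sqrt.continuousOn hA.isSelfAdjoint]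
  exact cfc_congr fun x _ ↦ Real.sqrt_sq_eq_abs x

theorem stmt0 {n : ℕ} (X Y : Mat n) (hX : X.IsHermitian) (hY : Y.IsHermitian)
    (hexp : NormedSpace.exp (Complex.I • X) = NormedSpace.exp (Complex.I • Y))
    (hXn : specNorm X ≤ Real.pi) :
    loewnerLE (matAbs X) (matAbs Y) := by
  have hcos : cfc Real.cos X = cfc Real.cos Y := by
    rw [← hX.realPart_exp_I_smul, ← hY.realPart_exp_I_smul, hexp]
  have habsX : cfc (fun x : ℝ ↦ |x|) X = cfc (Real.arccos ∘ Real.cos) X :=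
    cfc_congr fun x hx ↦ (Real.arccos_cos_abs
      ((hX.abs_le_norm_toEuclideanCLM_of_mem_spectrum hx).trans hXn)).symm
  change matAbs X ≤ matAbs Y
  calc matAbs X = cfc (Real.arccos ∘ Real.cos) Y := by
        rw [matAbs_eq_cfc_abs hX, habsX, cfc_comp _ _ _ hX.isSelfAdjoint, hcos,
          ← cfc_comp _ _ _ hY.isSelfAdjoint]
    _ ≤ matAbs Y := by
        rw [matAbs_eq_cfc_abs hY]
        exact cfc_mono fun x _ ↦ Real.arccos_cos_le_abs x

end
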